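/- For all integers n ≥ 1, 1 ≤ k ≤ n, and 0 ≤ t ≤ n−1, the partial sums of Krawtchouk values against the binomial weight satisfy Σ_{i=0}^t C(n,i)·K_k^{(n)}(i) = C(n,k)·K_t^{(n−1)}(k−1). Moreover, for t = n one has Σ_{i=0}^n C(n,i)·K_k^{(n)}(i) = 0 for every k with 1 ≤ k ≤ n. -/

import Mathlib

/-!
The reciprocity `C(n,i)·K_k(i) = C(n,k)·K_i(k)` turns the sum into `C(n,k)·Σ_{i ≤ t} K_i^{(n)}(k)`.
As `Σ_i K_i^{(n)}(x) zⁱ = (1 - z)^x (1 + z)^(n-x)`, for `x = m + 1` this generating function is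
`(1 - z)` times the one of `K^{(n-1)}(m)`, so the partial sums over `i` telescope to
`K_t^{(n-1)}(m)`. For `t = n` this vanishes, since `C(n-1-m, n-j) = 0` whenever `j ≤ m`.
-/

/-- The Krawtchouk polynomial `K_k^{(n)}(x) = Σ_{i=0}^k (−1)^i·C(x,i)·C(n−x,k−i)`. -/
def kraw (n k x : ℕ) : ℤ :=
  ∑ i ∈ Finset.range (k + 1),
    (-1 : ℤ) ^ i * (Nat.choose x i : ℤ) * (Nat.choose (n - x) (k - i) : ℤ)

open Finset

namespace Nat

theorem choose_mul_choose_sub_comm (n a b : ℕ) :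
    n.choose a * (n - a).choose b = n.choose b * (n - b).choose a := by
  rw [← add_tsub_cancel_left a b, ← choose_mul (le_add_right a b), add_tsub_cancel_left,
    ← add_tsub_cancel_right a b, ← choose_mul (le_add_left b a), add_tsub_cancel_right,
    choose_symm_add]

theorem choose_mul_choose_mul_choose_sub_comm {n i k j : ℕ} (hji : j ≤ i) (hjk : j ≤ k) :
    n.choose i * i.choose j * (n - i).choose (k - j)
      = n.choose k * k.choose j * (n - k).choose (i - j) := by
  rw [choose_mul hji, choose_mul hjk, mul_assoc, mul_assoc,
    show n - i = n - j - (i - j) by omega, show n - k = n - j - (k - j) by omega,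
    choose_mul_choose_sub_comm]

end Nat

theorem kraw_eq_sum_range_min (n k x : ℕ) :
    kraw n k x = ∑ j ∈ range (min x k + 1),
      (-1 : ℤ) ^ j * (x.choose j : ℤ) * ((n - x).choose (k - j) : ℤ) := by
  refine (sum_subset (range_subset_range.2 (by omega)) fun j hj hj' => ?_).symm
  simp only [mem_range] at hj hj'
  simp [Nat.choose_eq_zero_of_lt (show x < j by omega)]

theorem choose_mul_kraw_comm (n i k : ℕ) :
    (n.choose i : ℤ) * kraw n k i = (n.choose k : ℤ) * kraw n i k := by
  rw [kraw_eq_sum_range_min, kraw_eq_sum_range_min, min_comm, mul_sum, mul_sum]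
  refine sum_congr rfl fun j hj => ?_
  simp only [mem_range] at hj
  have h : (n.choose i * i.choose j * (n - i).choose (k - j) : ℤ)
      = n.choose k * k.choose j * (n - k).choose (i - j) := by
    exact_mod_cast Nat.choose_mul_choose_mul_choose_sub_comm (n := n) (by omega) (by omega)
  linear_combination (-1 : ℤ) ^ j * h

theorem kraw_succ_succ (n t m : ℕ) :
    kraw n (t + 1) (m + 1) = kraw (n - 1) (t + 1) m - kraw (n - 1) t m := by
  simp only [kraw, show n - (m + 1) = n - 1 - m by omega]
  rw [sum_range_succ', sum_range_succ' _ (t + 1)]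
  simp only [Nat.choose_succ_succ', Nat.add_sub_add_right, Nat.cast_add, mul_add, add_mul,
    sum_add_distrib, pow_succ, mul_neg_one, neg_mul, sum_neg_distrib, Nat.choose_zero_right]
  ring

theorem sum_range_kraw_succ (n t m : ℕ) :
    ∑ i ∈ range (t + 1), kraw n i (m + 1) = kraw (n - 1) t m := by
  induction t with
  | zero => simp [kraw]
  | succ t ih => rw [sum_range_succ, ih, kraw_succ_succ]; ring

theorem kraw_eq_zero_of_lt {n k x : ℕ} (hnk : n < k) (hx : x ≤ n) : kraw n k x = 0 := by
  refine sum_eq_zero fun i _ => ?_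
  rcases le_or_gt i x with h | h
  · simp [Nat.choose_eq_zero_of_lt (show n - x < k - i by omega)]
  · simp [Nat.choose_eq_zero_of_lt h]

theorem krawtchouk_partial_sums (n k : ℕ) (hk1 : 1 ≤ k) (hk2 : k ≤ n) :
    (∀ t : ℕ, t ≤ n - 1 →
      ∑ i ∈ Finset.range (t + 1), (Nat.choose n i : ℤ) * kraw n k i
        = (Nat.choose n k : ℤ) * kraw (n - 1) t (k - 1))
    ∧ ∑ i ∈ Finset.range (n + 1), (Nat.choose n i : ℤ) * kraw n k i = 0 := by
  obtain ⟨m, rfl⟩ : ∃ m, k = m + 1 := ⟨k - 1, by omega⟩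
  have partial_sum (t : ℕ) :
      ∑ i ∈ range (t + 1), (n.choose i : ℤ) * kraw n (m + 1) i
        = (n.choose (m + 1) : ℤ) * kraw (n - 1) t m := by
    simp_rw [choose_mul_kraw_comm n _ (m + 1), ← mul_sum, sum_range_kraw_succ]
  refine ⟨fun t _ => partial_sum t, ?_⟩
  rw [partial_sum, kraw_eq_zero_of_lt (by omega) (by omega), mul_zero]
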